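/- Let F be a fixed finite family of graphs, each connected and with at least one edge, at least one of which is planar and subcubic. Let G be a connected graph with no excessive protrusions. Then every two bouquets and/or thetas in G have disjoint edge sets. Furthermore, if a bouquet or theta is attached to U ⊆ V(G), then U is disjoint from all elements of any bouquet. -/

import Mathlib

open Classical

attribute [local instance] Classical.propDecidable

noncomputable section

/-- A finite multigraph without loops: finitely many vertices, finitely many
edges (parallel edges are allowed since `E` is an abstract edge type),
each edge having two distinct endpoints. -/
structure Multigraph : Type 1 where
  V : Type
  E : Type
  fintypeV : Fintype V
  fintypeE : Fintype E
  ends : E → Sym2 V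
  loopless : ∀ e : E, ¬ (ends e).IsDiag

attribute [instance] Multigraph.fintypeV Multigraph.fintypeE

theorem sym2_map_not_isDiag {α β : Type} {f : α → β} (hf : Function.Injective f) :
    ∀ {p : Sym2 α}, ¬ p.IsDiag → ¬ (p.map f).IsDiag := by
  intro p
  induction p using Sym2.ind with
  | _ x y =>
    intro hp h
    rw [Sym2.map_pair_eq, Sym2.mk_isDiag_iff] at h
    exact hp (by rw [Sym2.mk_isDiag_iff]; exact hf h)

theorem sym2_isDiag_of_map {α β : Type} (f : α → β) (p : Sym2 α)
    (hinj : ∀ x ∈ p, ∀ y ∈ p, f x = f y → x = y)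
    (h : (p.map f).IsDiag) : p.IsDiag := by
  induction p using Sym2.ind with
  | _ a b =>
    rw [Sym2.map_pair_eq, Sym2.mk_isDiag_iff] at h
    rw [Sym2.mk_isDiag_iff]
    exact hinj a (Sym2.mem_mk_left a b) b (Sym2.mem_mk_right a b) h

namespace Multigraph

/-- `|G|`: the number of vertices of `G`. -/
def numVerts (G : Multigraph) : ℕ := Fintype.card G.V

/-- `‖G‖`: the number of edges of `G` (with multiplicities). -/
def numEdges (G : Multigraph) : ℕ := Fintype.card G.E

/-- The degree of a vertex: the number of incident edges. -/
def degree (G : Multigraph) (v : G.V) : ℕ := {e : G.E | v ∈ G.ends e}.ncard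

/-- A graph is subcubic if every vertex has degree at most `3`. -/
def Subcubic (G : Multigraph) : Prop := ∀ v : G.V, G.degree v ≤ 3

/-- The graph `G - D` obtained by deleting the set `D` of edges. -/
def deleteEdges (G : Multigraph) (D : Finset G.E) : Multigraph where
  V := G.V
  E := {e : G.E // e ∉ D}
  fintypeV := G.fintypeV
  fintypeE := Fintype.ofFinite _
  ends := fun e => G.ends e.1
  loopless := fun e => G.loopless e.1

/-- Walks in a multigraph, recorded as sequences of edges together with
compatible endpoints. -/
inductive Walk (G : Multigraph) : G.V → G.V → Type
  | nil (v : G.V) : Walk G v v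
  | cons {u v w : G.V} (e : G.E) (h : G.ends e = s(u, v)) (p : Walk G v w) : Walk G u w

/-- The list of edges traversed by a walk. -/
def Walk.edges {G : Multigraph} : {u v : G.V} → Walk G u v → List G.E
  | _, _, .nil _ => []
  | _, _, .cons e _ p => e :: p.edges

/-- The list of vertices visited by a walk. -/
def Walk.support {G : Multigraph} : {u v : G.V} → Walk G u v → List G.V
  | u, _, .nil _ => [u]
  | u, _, .cons _ _ p => u :: p.support

/-- A walk is a path if it has no repeated vertices. -/
def Walk.IsPath {G : Multigraph} {u v : G.V} (p : Walk G u v) : Prop := p.support.Nodup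

def Reachable (G : Multigraph) (u v : G.V) : Prop := Nonempty (Walk G u v)

/-- A multigraph is connected if it is nonempty and every two vertices are
joined by a walk. -/
def Connected (G : Multigraph) : Prop := Nonempty G.V ∧ ∀ u v : G.V, G.Reachable u v

/-- The vertex set of the connected component of `v`. -/
def component (G : Multigraph) (v : G.V) : Set G.V := {u | G.Reachable u v}

/-- Reachability inside a set `S` of vertices, i.e. reachability in `G[S]`. -/
def ReachIn (G : Multigraph) (S : Set G.V) (u v : G.V) : Prop :=
  ∃ p : Walk G u v, ∀ x ∈ p.support, x ∈ S

/-- The induced subgraph `G[S]` is connected. -/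
def ConnectedOn (G : Multigraph) (S : Set G.V) : Prop :=
  ∀ u ∈ S, ∀ v ∈ S, G.ReachIn S u v

/-- The number of connected components of the induced subgraph `G[S]`, expressed
as the maximum size of a family of vertices of `S` that are pairwise
non-connected within `S`. -/
def compCount (G : Multigraph) (S : Set G.V) : ℕ :=
  sSup {n | ∃ f : Fin n → G.V, (∀ i, f i ∈ S) ∧
    ∀ i j, i ≠ j → ¬ G.ReachIn S (f i) (f j)}

/-- The set of edges of the induced subgraph `G[X]`. -/
def inducedEdges (G : Multigraph) (X : Set G.V) : Set G.E :=
  {e | ∀ v ∈ G.ends e, v ∈ X}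

/-- The edge boundary `δ(X)`: edges with exactly one endpoint in `X`. -/
def edgeBoundary (G : Multigraph) (X : Set G.V) : Set G.E :=
  {e | ∃ u v : G.V, G.ends e = s(u, v) ∧ u ∈ X ∧ v ∉ X}

/-- The (open) neighbourhood `N(S)`. -/
def nbhd (G : Multigraph) (S : Set G.V) : Set G.V :=
  {u | u ∉ S ∧ ∃ (e : G.E) (v : G.V), v ∈ S ∧ G.ends e = s(u, v)}

/-- All parallel edges between `u` and `v`. -/
def parallelEdges (G : Multigraph) (u v : G.V) : Set G.E := {e | G.ends e = s(u, v)}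

/-- Planarity of a multigraph, via a topological embedding in the plane:
vertices map injectively to points, edges map to arcs between the images of
their endpoints, and two arcs may only meet at images of common endpoints. -/
def Planar (G : Multigraph) : Prop :=
  ∃ f : G.V → ℝ × ℝ, Function.Injective f ∧
    ∃ γ : G.E → ℝ → ℝ × ℝ,
      (∀ e, ContinuousOn (γ e) (Set.Icc 0 1)) ∧
      (∀ e, Set.InjOn (γ e) (Set.Icc 0 1)) ∧
      (∀ e, ∃ u v : G.V, G.ends e = s(u, v) ∧ γ e 0 = f u ∧ γ e 1 = f v) ∧
      (∀ (e : G.E) (v : G.V), f v ∈ γ e '' Set.Icc 0 1 → v ∈ G.ends e) ∧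
      (∀ e e' : G.E, e ≠ e' →
        ∀ pt ∈ γ e '' Set.Icc 0 1 ∩ γ e' '' Set.Icc 0 1, ∃ v : G.V, pt = f v)

/-- The disjoint union `G ⊎ H` of two multigraphs. -/
def disjUnion (G H : Multigraph) : Multigraph where
  V := G.V ⊕ H.V
  E := G.E ⊕ H.E
  fintypeV := Fintype.ofFinite _
  fintypeE := Fintype.ofFinite _
  ends := Sum.elim (fun e => (G.ends e).map Sum.inl) (fun e => (H.ends e).map Sum.inr)
  loopless := by
    rintro (e | e) h
    · exact sym2_map_not_isDiag Sum.inl_injective (G.loopless e) h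
    · exact sym2_map_not_isDiag Sum.inr_injective (H.loopless e) h

/-- The induced subgraph `G[S]` (equivalently, `G` with the vertices outside
`S` deleted). -/
def induce (G : Multigraph) (S : Set G.V) : Multigraph where
  V := ↥S
  E := {e : G.E // ∀ v ∈ G.ends e, v ∈ S}
  fintypeV := Fintype.ofFinite _
  fintypeE := Fintype.ofFinite _
  ends := fun e =>
    Sym2.map (fun a => if ha : a ∈ S then (⟨a, ha⟩ : ↥S)
      else ⟨(Quot.out (G.ends e.1)).1, e.2 _ (Sym2.out_fst_mem _)⟩) (G.ends e.1)
  loopless := by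
    intro e h
    apply G.loopless e.1
    refine sym2_isDiag_of_map _ _ (fun x hx' y hy' hf => ?_) h
    have hx : x ∈ S := e.2 x hx'
    have hy : y ∈ S := e.2 y hy'
    simp only [dif_pos hx, dif_pos hy] at hf
    exact congrArg Subtype.val hf

/-- Build a multigraph from a simple graph. -/
def ofSimple {V : Type} [Fintype V] (G : SimpleGraph V) : Multigraph where
  V := V
  E := G.edgeSet
  fintypeV := ‹Fintype V›
  fintypeE := Fintype.ofFinite _
  ends := Subtype.val
  loopless := fun e => SimpleGraph.not_isDiag_of_mem_edgeSet G e.2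

end Multigraph

open Multigraph

/-- An immersion of `H` into `G`: an injection on vertices together with
pairwise edge-disjoint paths in `G` joining the images of the endpoints of
the edges of `H`. -/
structure Immersion (H G : Multigraph) where
  vmap : H.V → G.V
  vmap_inj : Function.Injective vmap
  esrc : H.E → H.V
  etgt : H.E → H.V
  ends_eq : ∀ e : H.E, H.ends e = s(esrc e, etgt e)
  emap : (e : H.E) → Multigraph.Walk G (vmap (esrc e)) (vmap (etgt e))
  emap_path : ∀ e : H.E, (emap e).IsPath
  edge_disjoint : ∀ e e' : H.E, e ≠ e' → ∀ x : G.E, x ∈ (emap e).edges → x ∉ (emap e').edges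

/-- `G` contains `H` as an immersion. -/
def ContainsImm (G H : Multigraph) : Prop := Nonempty (Immersion H G)

/-- `G` is `F`-immersion-free. -/
def FFree {ι : Type} (F : ι → Multigraph) (G : Multigraph) : Prop :=
  ∀ i : ι, ¬ ContainsImm G (F i)

/-- The induced subgraph `G[X]` is `F`-immersion-free: there is no immersion
model of a member of `F` living entirely inside `X`. -/
def FFreeOn {ι : Type} (F : ι → Multigraph) (G : Multigraph) (X : Set G.V) : Prop :=
  ∀ i : ι, ¬ ∃ M : Immersion (F i) G, (∀ v, M.vmap v ∈ X) ∧
    ∀ (e : (F i).E), ∀ x ∈ (M.emap e).support, x ∈ X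

/-- `OPT_F(G)`: the minimum size of an edge set whose deletion makes `G`
`F`-immersion-free. -/
def OPT {ι : Type} (F : ι → Multigraph) (G : Multigraph) : ℕ :=
  sInf {k | ∃ D : Finset G.E, D.card = k ∧ FFree F (G.deleteEdges D)}

/-- `H` belongs to the immersion-obstruction set of the class `C`:
`H ∉ C` and every proper immersion of `H` belongs to `C`. -/
def InObsIm (C : Multigraph → Prop) (H : Multigraph) : Prop :=
  ¬ C H ∧ ∀ H' : Multigraph, ContainsImm H H' → ¬ ContainsImm H' H → C H'

/-- `MAX_F`: the maximum number of edges of a member of the family. -/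
def maxEdges {ι : Type} [Fintype ι] (F : ι → Multigraph) : ℕ :=
  Finset.univ.sup fun i => (F i).numEdges

/-- The underlying asymmetric adjacency relation of the `n × n` wall. -/
def wallRel (n : ℕ) (a b : Fin n × Fin (2 * n)) : Prop :=
  (a.1 = b.1 ∧ (a.2 : ℕ) + 1 = (b.2 : ℕ)) ∨
  (a.2 = b.2 ∧ (a.1 : ℕ) + 1 = (b.1 : ℕ) ∧ ((a.1 : ℕ) + (a.2 : ℕ)) % 2 = 0)

/-- The `n × n` wall graph `W_{n,n}`. -/
def Wall (n : ℕ) : Multigraph := Multigraph.ofSimple (SimpleGraph.fromRel (wallRel n))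

/-- A graph parameter is closed under immersions. -/
def ImmersionClosed (p : Multigraph → ℕ) : Prop :=
  ∀ G H : Multigraph, ContainsImm G H → p H ≤ p G

/-- A graph parameter is closed under disjoint unions. -/
def DisjUnionClosed (p : Multigraph → ℕ) : Prop :=
  ∀ G H : Multigraph, p (G.disjUnion H) = max (p G) (p H)

/-- A graph parameter is large on walls. -/
def LargeOnWalls (p : Multigraph → ℕ) : Prop :=
  (Set.range fun n : ℕ => p (Wall n)).Infinite

/-- The parameter `p_r`: the minimum number of edge deletions needed to bring
the value of `p` down to at most `r`. -/
def pAtMost (p : Multigraph → ℕ) (r : ℕ) (G : Multigraph) : ℕ :=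
  sInf {k | ∃ S : Finset G.E, S.card ≤ k ∧ p (G.deleteEdges S) ≤ r}

/-- A tree-cut decomposition of `G`: a forest `T` on node set `N` together with
a near-partition of `V(G)` into bags, such that the trees of the forest
correspond exactly to the connected components of `G`. -/
structure TreeCutDecomp (G : Multigraph) : Type 1 where
  N : Type
  fintypeN : Fintype N
  T : SimpleGraph N
  acyclic : T.IsAcyclic
  bag : N → Finset G.V
  nodeOf : G.V → N
  mem_bag : ∀ v : G.V, v ∈ bag (nodeOf v)
  bag_disjoint : ∀ t t' : N, t ≠ t' → Disjoint (bag t) (bag t')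
  comp_compat : ∀ u v : G.V, G.Reachable u v ↔ T.Reachable (nodeOf u) (nodeOf v)
  trees_used : ∀ t : N, ∃ v : G.V, T.Reachable t (nodeOf v)

attribute [instance] TreeCutDecomp.fintypeN

/-- A multigraph with a marked set of core vertices; the remaining vertices
are peripheral.  (Used for torsos and 3-centers.) -/
structure MarkedGraph : Type 1 where
  G : Multigraph
  core : Set G.V

/-- The vertex `z` has exactly two incident edges, one to `a` and one to `b`. -/
def SuppPair (G : Multigraph) (z a b : G.V) : Prop :=
  ∃ e1 e2 : G.E, e1 ≠ e2 ∧ G.ends e1 = s(z, a) ∧ G.ends e2 = s(z, b) ∧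
    ∀ e : G.E, z ∈ G.ends e → e = e1 ∨ e = e2

/-- `M'` is obtained from `M` by suppressing one peripheral vertex of degree at
most two (deleting any resulting loop). -/
def Suppresses (M M' : MarkedGraph) : Prop :=
  ∃ z : M.G.V, z ∉ M.core ∧ M.G.degree z ≤ 2 ∧
    ∃ fV : M'.G.V ≃ {v : M.G.V // v ≠ z},
      (∀ w : M'.G.V, w ∈ M'.core ↔ (fV w).1 ∈ M.core) ∧
      ((¬ (∃ a b : M.G.V, a ≠ b ∧ SuppPair M.G z a b) ∧
          ∃ fE : M'.G.E ≃ {e : M.G.E // z ∉ M.G.ends e},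
            ∀ e : M'.G.E, Sym2.map (fun w => (fV w).1) (M'.G.ends e) = M.G.ends (fE e).1) ∨
        (∃ a b : M.G.V, a ≠ b ∧ SuppPair M.G z a b ∧
          ∃ fE : M'.G.E ≃ ({e : M.G.E // z ∉ M.G.ends e} ⊕ Unit),
            ∀ e : M'.G.E, Sym2.map (fun w => (fV w).1) (M'.G.ends e) =
              Sum.elim (fun e' : {e : M.G.E // z ∉ M.G.ends e} => M.G.ends e'.1)
                (fun _ => s(a, b)) (fE e)))

/-- No peripheral vertex can be suppressed any more. -/
def MarkedGraph.Terminal (M : MarkedGraph) : Prop :=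
  ∀ z : M.G.V, z ∉ M.core → 2 < M.G.degree z

namespace TreeCutDecomp

variable {G : Multigraph}

/-- `X_{T_{ab}}`: the union of the bags on the side of `a` of the tree edge `ab`. -/
def side (D : TreeCutDecomp G) (a b : D.N) : Set G.V :=
  {v | (D.T.deleteEdges {s(a, b)}).Reachable (D.nodeOf v) a}

/-- The adhesion of the tree edge `ab`: the edges of `G` crossing between the
two sides. -/
def adh (D : TreeCutDecomp G) (a b : D.N) : Set G.E :=
  {e | ∃ u v : G.V, G.ends e = s(u, v) ∧ u ∈ D.side a b ∧ v ∈ D.side b a}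

/-- `w(t) = |X_t| + #{neighbours with bold adhesion}`. -/
def wval (D : TreeCutDecomp G) (t : D.N) : ℕ :=
  (D.bag t).card + {t' : D.N | D.T.Adj t t' ∧ 2 < (D.adh t t').ncard}.ncard

/-- The maximum adhesion size of the decomposition. -/
def maxAdh (D : TreeCutDecomp G) : ℕ :=
  Finset.univ.sup fun pq : D.N × D.N =>
    if D.T.Adj pq.1 pq.2 then (D.adh pq.1 pq.2).ncard else 0

/-- `width'` of a tree-cut decomposition. -/
def width' (D : TreeCutDecomp G) : ℕ :=
  max D.maxAdh (Finset.univ.sup fun t => D.wval t)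

/-- `z(t) = |X_t| + Σ_{e ∋ t, |adh(e)| ≥ 3} |adh(e)|`. -/
def zval (D : TreeCutDecomp G) (t : D.N) : ℕ :=
  (D.bag t).card + ∑ t' : D.N,
    if D.T.Adj t t' ∧ 3 ≤ (D.adh t t').ncard then (D.adh t t').ncard else 0

/-- `width''` of a tree-cut decomposition. -/
def width'' (D : TreeCutDecomp G) : ℕ := Finset.univ.sup fun t => D.zval t

/-- A tree-cut decomposition is connected if both sides of every tree edge
induce connected subgraphs of `G`. -/
def IsConnectedDecomp (D : TreeCutDecomp G) : Prop :=
  ∀ a b : D.N, D.T.Adj a b → G.ConnectedOn (D.side a b) ∧ G.ConnectedOn (D.side b a)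

/-- The vertex type of the torso at `t`: the core vertices (the bag at `t`)
together with one peripheral vertex for each component of `T - t` inside the
tree of `t` (equivalently, for each neighbour of `t`). -/
def TorsoV (D : TreeCutDecomp G) (t : D.N) : Type :=
  {v : G.V // v ∈ D.bag t} ⊕ {x : D.N // D.T.Adj t x}

/-- The projection of the vertices of `G` to the vertices of the torso at `t`
(defined on the connected component of `G` corresponding to the tree of `t`). -/
def torsoProj (D : TreeCutDecomp G) (t : D.N) (v : G.V) : Option (D.TorsoV t) :=
  if h : v ∈ D.bag t then some (Sum.inl ⟨v, h⟩)
  else if h2 : ∃ x : {x : D.N // D.T.Adj t x},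
      (D.T.deleteEdges {e : Sym2 D.N | t ∈ e}).Reachable (D.nodeOf v) x.1
    then some (Sum.inr h2.choose)
  else none

/-- The torso of the decomposition at the node `t` (as a multigraph): each
component of `T - t` is consolidated to a single peripheral vertex, and the
resulting loops are deleted. -/
instance instFintypeTorsoV (D : TreeCutDecomp G) (t : D.N) : Fintype (D.TorsoV t) := by
  unfold TorsoV; infer_instance

def torsoGraph (D : TreeCutDecomp G) (t : D.N) : Multigraph where
  V := D.TorsoV t
  E := {e : G.E // ∃ a b : D.TorsoV t, a ≠ b ∧
        Sym2.map (D.torsoProj t) (G.ends e) = s(some a, some b)}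
  fintypeV := inferInstance
  fintypeE := Fintype.ofFinite _
  ends := fun e => s(e.2.choose, e.2.choose_spec.choose)
  loopless := fun e hd => e.2.choose_spec.choose_spec.1 (Sym2.mk_isDiag_iff.mp hd)

/-- The torso at `t` as a marked graph: the core vertices are the vertices of
the bag at `t`. -/
def torso (D : TreeCutDecomp G) (t : D.N) : MarkedGraph where
  G := D.torsoGraph t
  core := Set.range (Sum.inl : {v : G.V // v ∈ D.bag t} → D.TorsoV t)

/-- The possible numbers of vertices of a 3-center at `t`: the sizes of the
terminal marked graphs obtained from the torso at `t` by exhaustively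
suppressing peripheral vertices of degree at most two. -/
def threeCenterSizes (D : TreeCutDecomp G) (t : D.N) : Set ℕ :=
  {n | ∃ M : MarkedGraph, Relation.ReflTransGen Suppresses (D.torso t) M ∧
    M.Terminal ∧ Fintype.card M.G.V = n}

/-- The width of a tree-cut decomposition: the maximum over all adhesion sizes
and all numbers of vertices of 3-centers. -/
def width (D : TreeCutDecomp G) : ℕ :=
  max D.maxAdh (Finset.univ.sup fun t => sSup (D.threeCenterSizes t))

/-- The component `T_{tp}` of `T - p` is connected with a neat adhesion to `p`:
the adhesion of `tp` is thin and all of its edges have an endpoint in `X_p`. -/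
def NeatAdhesionTo (D : TreeCutDecomp G) (p t : D.N) : Prop :=
  (D.adh t p).ncard ≤ 2 ∧ ∀ e ∈ D.adh t p, ∃ v ∈ D.bag p, v ∈ G.ends e

end TreeCutDecomp

/-- Tree-cut width (via the width with 3-centers). -/
def tcw (G : Multigraph) : ℕ := sInf {k | ∃ D : TreeCutDecomp G, D.width = k}

/-- Tree-cut width via `width'`. -/
def tcw' (G : Multigraph) : ℕ := sInf {k | ∃ D : TreeCutDecomp G, D.width' = k}

/-- A rooted tree-cut decomposition: every tree of the forest gets a root,
encoded by a parent function (roots are their own parents) together with a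
depth function certifying well-foundedness; the parent relation orients all
tree edges. -/
structure RootedTreeCutDecomp (G : Multigraph) extends TreeCutDecomp G where
  parent : N → N
  depth : N → ℕ
  parent_adj : ∀ t : N, parent t ≠ t → T.Adj t (parent t)
  depth_lt : ∀ t : N, parent t ≠ t → depth (parent t) < depth t
  parent_cover : ∀ t t' : N, T.Adj t t' → parent t = t' ∨ parent t' = t

namespace RootedTreeCutDecomp

variable {G : Multigraph}

/-- A rooted tree-cut decomposition is neat: it is connected, and for every
non-root node `t` whose adhesion to its parent is thin and every sibling `t'`
of `t`, there are no edges of `G` between `X_{T_{tπ(t)}}` and `X_{T_{t'π(t)}}`. -/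
def Neat (D : RootedTreeCutDecomp G) : Prop :=
  D.toTreeCutDecomp.IsConnectedDecomp ∧
  ∀ t : D.N, D.parent t ≠ t →
    (D.toTreeCutDecomp.adh t (D.parent t)).ncard ≤ 2 →
    ∀ t' : D.N, t' ≠ t → D.parent t' = D.parent t → D.parent t' ≠ t' →
      ∀ e : G.E, ¬ ∃ u v : G.V, G.ends e = s(u, v) ∧
        u ∈ D.toTreeCutDecomp.side t (D.parent t) ∧
        v ∈ D.toTreeCutDecomp.side t' (D.parent t')

end RootedTreeCutDecomp

/-- An `r`-protrusion: a set of vertices with boundary of size at most `r`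
inducing an `F`-immersion-free subgraph. -/
def IsProtrusion {ι : Type} (F : ι → Multigraph) (G : Multigraph) (r : ℕ) (X : Set G.V) : Prop :=
  (G.edgeBoundary X).ncard ≤ r ∧ FFreeOn F G X

/-- `B` is an excessive protrusion inside the connected component of `G`
containing it (with parameters `b = b_F` and `c = c_F`): it is a
`2b`-protrusion with more than `2bc` induced edges, whose removal from its
component leaves at most two connected components. -/
def IsExcessiveIn {ι : Type} (F : ι → Multigraph) (b c : ℕ) (G : Multigraph)
    (B : Set G.V) : Prop :=
  ∃ v₀ ∈ B, B ⊆ G.component v₀ ∧ IsProtrusion F G (2 * b) B ∧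
    2 * b * c < (G.inducedEdges B).ncard ∧ G.compCount (G.component v₀ \ B) ≤ 2

/-- Some connected component of `G` has an excessive protrusion. -/
def HasExcessive {ι : Type} (F : ι → Multigraph) (b c : ℕ) (G : Multigraph) : Prop :=
  ∃ B : Set G.V, IsExcessiveIn F b c G B

/-- `c` is a valid constant for the protrusion-replacement lemma with width
constant `b`. -/
def ReplacerConst {ι : Type} (F : ι → Multigraph) (b c : ℕ) : Prop :=
  ∀ (G : Multigraph) (X : Set G.V), IsProtrusion F G (2 * b) X →
    c < (G.inducedEdges X).ncard →
    ∃ G' : Multigraph, OPT F G' = OPT F G ∧ G'.numEdges < G.numEdges ∧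
      ∀ D' : Finset G'.E, FFree F (G'.deleteEdges D') →
        ∃ D : Finset G.E, FFree F (G.deleteEdges D) ∧ D.card ≤ D'.card

/-- `G[U ∪ A]` and `G[U ∪ B]` are isomorphic via an isomorphism mapping every
vertex of `U` to itself. -/
def InducedIsoFixing (G : Multigraph) (U A B : Set G.V) : Prop :=
  ∃ φ : G.V → G.V, Set.BijOn φ (U ∪ A) (U ∪ B) ∧ (∀ u ∈ U, φ u = u) ∧
    ∃ ψ : G.E → G.E, Set.BijOn ψ (G.inducedEdges (U ∪ A)) (G.inducedEdges (U ∪ B)) ∧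
      ∀ e ∈ G.inducedEdges (U ∪ A), G.ends (ψ e) = (G.ends e).map φ

/-- A family of pairwise disjoint, connected `2`-protrusions all attached to
`U` and pairwise isomorphic over `U`. -/
def IsBouquetFamily {ι : Type} (F : ι → Multigraph) (G : Multigraph) (U : Set G.V)
    (𝒮 : Set (Set G.V)) : Prop :=
  (∀ S ∈ 𝒮, S.Nonempty ∧ IsProtrusion F G 2 S ∧ G.nbhd S = U ∧ G.ConnectedOn S) ∧
  𝒮.Pairwise (fun S S' => Disjoint S S') ∧
  ∀ S ∈ 𝒮, ∀ S' ∈ 𝒮, InducedIsoFixing G U S S'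

/-- A bouquet attached to `U` (with threshold `d = d_F`): an inclusion-maximal
bouquet family with at least `d` elements. -/
def IsBouquet {ι : Type} (F : ι → Multigraph) (d : ℕ) (G : Multigraph) (U : Set G.V)
    (𝒮 : Set (Set G.V)) : Prop :=
  IsBouquetFamily F G U 𝒮 ∧ d ≤ 𝒮.ncard ∧
  ∀ 𝒮' : Set (Set G.V), 𝒮 ⊆ 𝒮' → IsBouquetFamily F G U 𝒮' → 𝒮' = 𝒮

/-- The edge set of a bouquet: all edges incident to some element of it. -/
def Multigraph.bouquetEdges (G : Multigraph) (𝒮 : Set (Set G.V)) : Set G.E :=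
  {e | ∃ S ∈ 𝒮, ∃ v ∈ G.ends e, v ∈ S}

/-- A theta attached to `{u, v}` (with threshold `d = d_F`): `u` and `v` are
joined by at least `d` parallel edges (the theta itself being the maximal set
of all parallel edges between them). -/
def IsTheta (d : ℕ) (G : Multigraph) (u v : G.V) : Prop :=
  u ≠ v ∧ d ≤ (G.parallelEdges u v).ncard

/-- The constant `d_F = max(2 b_F c_F + 2 b_F, 3 MAX_F) + 1`. -/
def dConst {ι : Type} [Fintype ι] (F : ι → Multigraph) (b c : ℕ) : ℕ :=
  max (2 * b * c + 2 * b) (3 * maxEdges F) + 1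

/-- An `r`-boundaried graph. -/
structure BGraph (r : ℕ) : Type 1 where
  G : Multigraph
  bnd : Fin r → G.V

/-- Gluing two `r`-boundaried graphs: take the disjoint union and add one edge
joining the `i`-th boundary vertices, for each `i`. -/
def glue {r : ℕ} (A B : BGraph r) : Multigraph where
  V := A.G.V ⊕ B.G.V
  E := (A.G.E ⊕ B.G.E) ⊕ Fin r
  fintypeV := Fintype.ofFinite _
  fintypeE := Fintype.ofFinite _
  ends := Sum.elim
    (Sum.elim (fun e => (A.G.ends e).map Sum.inl) (fun e => (B.G.ends e).map Sum.inr))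
    (fun i => s(Sum.inl (A.bnd i), Sum.inr (B.bnd i)))
  loopless := by
    rintro ((e | e) | i) h
    · exact sym2_map_not_isDiag Sum.inl_injective (A.G.loopless e) h
    · exact sym2_map_not_isDiag Sum.inr_injective (B.G.loopless e) h
    · simp only [Sum.elim_inr, Sym2.mk_isDiag_iff] at h
      exact Sum.inl_ne_inr h

/-- The extended graph `Ĝ` of an `r`-boundaried graph: add a new pendant vertex
`û_i` adjacent exactly to the `i`-th boundary vertex, for each `i`. -/
def BGraph.extend {r : ℕ} (A : BGraph r) : Multigraph where
  V := A.G.V ⊕ Fin r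
  E := A.G.E ⊕ Fin r
  fintypeV := Fintype.ofFinite _
  fintypeE := Fintype.ofFinite _
  ends := Sum.elim (fun e => (A.G.ends e).map Sum.inl)
    (fun i => s(Sum.inl (A.bnd i), Sum.inr i))
  loopless := by
    rintro (e | i) h
    · exact sym2_map_not_isDiag Sum.inl_injective (A.G.loopless e) h
    · simp only [Sum.elim_inr, Sym2.mk_isDiag_iff] at h
      exact Sum.inl_ne_inr h

/-- A relevant pair `(Q, φ)`: a graph with at most `(r+1)·MAX_F` edges and no
isolated vertices together with a nonempty partial map from its vertices to `[r]`. -/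
def RelevantPair (r m : ℕ) (Q : Multigraph) (φ : Q.V → Option (Fin r)) : Prop :=
  Q.numEdges ≤ (r + 1) * m ∧ (∀ v : Q.V, ∃ e : Q.E, v ∈ Q.ends e) ∧ ∃ v i, φ v = some i

/-- `Ĝ - D` admits a `φ`-rooted immersion model of `Q`: an immersion model of
`Q` mapping every vertex in the domain of `φ` to the corresponding copy `û_i`. -/
def HasRootedModel {r : ℕ} (A : BGraph r) (D : Finset A.extend.E)
    (Q : Multigraph) (φ : Q.V → Option (Fin r)) : Prop :=
  ∃ M : Immersion Q (A.extend.deleteEdges D),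
    ∀ (v : Q.V) (i : Fin r), φ v = some i → M.vmap v = Sum.inr i

/-- The deletion number of an `r`-boundaried graph with respect to a set `S` of
relevant pairs: the minimum number of edges of `Ĝ` whose deletion leaves no
`φ`-rooted immersion model of `Q`, for every `(Q, φ) ∈ S`. -/
def delNum {r : ℕ} (A : BGraph r)
    (S : ∀ Q : Multigraph, (Q.V → Option (Fin r)) → Prop) : ℕ :=
  sInf {k | ∃ D : Finset A.extend.E, D.card = k ∧
    ∀ (Q : Multigraph) (φ : Q.V → Option (Fin r)), S Q φ → ¬ HasRootedModel A D Q φ}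

/-- Two `r`-boundaried graphs have the same signature: their deletion numbers
agree on every set of relevant pairs. -/
def SameSig {r : ℕ} (m : ℕ) (A B : BGraph r) : Prop :=
  ∀ S : ∀ Q : Multigraph, (Q.V → Option (Fin r)) → Prop,
    (∀ Q φ, S Q φ → RelevantPair r m Q φ) → delNum A S = delNum B S

/-- `F`-equivalence of `r`-boundaried graphs. -/
def FEquiv {ι : Type} (F : ι → Multigraph) {r : ℕ} (A B : BGraph r) : Prop :=
  ∀ C : BGraph r, OPT F (glue A C) = OPT F (glue B C)

namespace Multigraph

variable {G : Multigraph}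

def Walk.append : {u v w : G.V} → Walk G u v → Walk G v w → Walk G u w
  | _, _, _, .nil _, q => q
  | _, _, _, .cons e h p, q => .cons e h (Walk.append p q)

theorem Walk.start_mem_support : ∀ {u v : G.V} (p : Walk G u v), u ∈ p.support
  | _, _, .nil _ => List.mem_singleton.mpr rfl
  | _, _, .cons _ _ _ => List.mem_cons_self

theorem Walk.mem_support_append {u v w : G.V} (p : Walk G u v) (q : Walk G v w) :
    ∀ x ∈ (p.append q).support, x ∈ p.support ∨ x ∈ q.support := by
  induction p generalizing w with
  | nil v => intro x hx; exact Or.inr hx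
  | cons e h p ih =>
    intro x hx
    simp only [Walk.append, Walk.support, List.mem_cons] at hx ⊢
    rcases hx with rfl | hx
    · exact Or.inl (Or.inl rfl)
    · rcases ih q _ hx with h1 | h1
      · exact Or.inl (Or.inr h1)
      · exact Or.inr h1

def Walk.reverse : {u v : G.V} → Walk G u v → Walk G v u
  | _, _, .nil v => .nil v
  | _, _, .cons e h p => p.reverse.append (.cons e (h.trans (Sym2.eq_swap)) (.nil _))

theorem Walk.mem_support_reverse {u v : G.V} (p : Walk G u v) :
    ∀ x ∈ p.reverse.support, x ∈ p.support := by
  induction p with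
  | nil v => intro x hx; exact hx
  | @cons u v w e h p ih =>
    intro x hx
    rcases Walk.mem_support_append _ _ x hx with h1 | h1
    · exact List.mem_cons_of_mem _ (ih x h1)
    · simp only [Walk.support, List.mem_cons, List.mem_singleton] at h1
      rcases h1 with rfl | rfl | hf
      · exact List.mem_cons_of_mem _ (Walk.start_mem_support p)
      · exact List.mem_cons_self
      · exact absurd hf List.not_mem_nil

theorem ReachIn.refl {S : Set G.V} {u : G.V} (h : u ∈ S) : G.ReachIn S u u :=
  ⟨.nil u, by intro x hx; simp only [Walk.support, List.mem_singleton] at hx; exact hx ▸ h⟩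

theorem ReachIn.symm {S : Set G.V} {u v : G.V} (h : G.ReachIn S u v) : G.ReachIn S v u := by
  obtain ⟨p, hp⟩ := h
  exact ⟨p.reverse, fun x hx => hp x (Walk.mem_support_reverse p x hx)⟩

theorem ReachIn.trans {S : Set G.V} {u v w : G.V} (h1 : G.ReachIn S u v)
    (h2 : G.ReachIn S v w) : G.ReachIn S u w := by
  obtain ⟨p, hp⟩ := h1
  obtain ⟨q, hq⟩ := h2
  exact ⟨p.append q, fun x hx => (Walk.mem_support_append p q x hx).elim (hp x) (hq x)⟩

end Multigraph
namespace Multigraph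

theorem parallelEdges_comm (G : Multigraph) (u v : G.V) :
    G.parallelEdges u v = G.parallelEdges v u := by
  ext e
  constructor <;> intro h <;> exact h.trans (Sym2.eq_swap)

theorem exit_to_nbhd {G : Multigraph} {S : Set G.V} {x y : G.V} (p : Walk G x y)
    (hx : x ∉ S) (hy : y ∈ S) :
    ∃ u, u ∈ G.nbhd S ∧ G.ReachIn (Set.univ \ S) x u := by
  induction p with
  | nil v => exact absurd hy hx
  | @cons u v w e h p ih =>
    by_cases hv : v ∈ S
    · refine ⟨u, ⟨hx, e, v, hv, h⟩, ReachIn.refl ⟨trivial, hx⟩⟩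
    · obtain ⟨z, hz, q, hq⟩ := ih hv hy
      refine ⟨z, hz, .cons e h q, ?_⟩
      intro a ha
      simp only [Walk.support, List.mem_cons] at ha
      rcases ha with rfl | ha
      · exact ⟨trivial, hx⟩
      · exact hq a ha

theorem stay_in {G : Multigraph} {T T' : Set G.V} (hdisj : ∀ a ∈ T, a ∉ G.nbhd T')
    {z y : G.V} (p : Walk G z y) (hsupp : ∀ a ∈ p.support, a ∈ T) (hz : z ∈ T') :
    y ∈ T' := by
  induction p with
  | nil v => exact hz
  | @cons u v w e h p ih =>
    have hvT : v ∈ T := hsupp v (List.mem_cons_of_mem _ (Walk.start_mem_support p))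
    have hvT' : v ∈ T' := by
      by_contra hv
      exact hdisj v hvT ⟨hv, e, u, hz, h.trans (Sym2.eq_swap)⟩
    exact ih (fun a ha => hsupp a (List.mem_cons_of_mem _ ha)) hvT'

theorem nbhd_ncard_le (G : Multigraph) (S : Set G.V) :
    (G.nbhd S).ncard ≤ (G.edgeBoundary S).ncard := by
  have hsel : ∀ u : ↥(G.nbhd S), ∃ e : G.E, e ∈ G.edgeBoundary S ∧
      ∃ v, v ∈ S ∧ G.ends e = s(u.1, v) := by
    rintro ⟨u, hu, e, v, hv, he⟩
    exact ⟨e, ⟨v, u, he.trans (Sym2.eq_swap), hv, hu⟩, v, hv, he⟩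
  choose g hg1 hg2 using hsel
  have hinj : Function.Injective (fun u : ↥(G.nbhd S) => (⟨g u, hg1 u⟩ : ↥(G.edgeBoundary S))) := by
    rintro u u' huu
    simp only [Subtype.mk.injEq] at huu
    obtain ⟨v, hv, he⟩ := hg2 u
    obtain ⟨v', hv', he'⟩ := hg2 u'
    rw [huu, he'] at he
    rw [Sym2.eq_iff] at he
    rcases he with ⟨h1, _⟩ | ⟨h1, h2⟩
    · exact (Subtype.ext h1).symm
    · exact absurd (h1.symm ▸ hv) u'.2.1
  have := Nat.card_le_card_of_injective _ hinj
  rwa [Nat.card_coe_set_eq, Nat.card_coe_set_eq] at this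

theorem compCount_le_two {G : Multigraph} (hGconn : G.Connected) {S : Set G.V}
    (hS : S.Nonempty) (hbd : (G.edgeBoundary S).ncard ≤ 2) :
    G.compCount (Set.univ \ S) ≤ 2 := by
  apply csSup_le'
  rintro n ⟨f, hf1, hf2⟩
  obtain ⟨v₀, hv₀⟩ := hS
  have hsel : ∀ i : Fin n, ∃ u, u ∈ G.nbhd S ∧ G.ReachIn (Set.univ \ S) (f i) u := by
    intro i
    obtain ⟨p⟩ := hGconn.2 (f i) v₀
    exact exit_to_nbhd p (hf1 i).2 hv₀
  choose u hu1 hu2 using hsel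
  have hinj : Function.Injective (fun i : Fin n => (⟨u i, hu1 i⟩ : ↥(G.nbhd S))) := by
    intro i j hij
    by_contra hne
    simp only [Subtype.mk.injEq] at hij
    exact hf2 i j hne ((hu2 i).trans (hij ▸ (hu2 j).symm))
  have h1 := Nat.card_le_card_of_injective _ hinj
  rw [Nat.card_coe_set_eq, Nat.card_eq_fintype_card, Fintype.card_fin] at h1
  exact h1.trans ((G.nbhd_ncard_le S).trans hbd)

end Multigraph
theorem mk_excessive {ι : Type} (F : ι → Multigraph) (b c : ℕ) (hb : 1 ≤ b)
    {G : Multigraph} (hGconn : G.Connected) {S : Set G.V} (hS : S.Nonempty)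
    (hprot : IsProtrusion F G 2 S) (hcard : 2 * b * c < (G.inducedEdges S).ncard) :
    HasExcessive F b c G := by
  obtain ⟨v₀, hv₀⟩ := hS
  have hcomp : G.component v₀ = Set.univ :=
    Set.eq_univ_of_forall fun u => hGconn.2 u v₀
  refine ⟨S, v₀, hv₀, ?_, ⟨hprot.1.trans (by linarith), hprot.2⟩, hcard, ?_⟩
  · rw [hcomp]; exact Set.subset_univ S
  · rw [hcomp]
    exact Multigraph.compCount_le_two hGconn ⟨v₀, hv₀⟩ hprot.1

theorem iso_trans {G : Multigraph} {U A B C : Set G.V}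
    (h1 : InducedIsoFixing G U A B) (h2 : InducedIsoFixing G U B C) :
    InducedIsoFixing G U A C := by
  obtain ⟨φ1, hφ1, hfix1, ψ1, hψ1, hends1⟩ := h1
  obtain ⟨φ2, hφ2, hfix2, ψ2, hψ2, hends2⟩ := h2
  refine ⟨φ2 ∘ φ1, hφ2.comp hφ1, fun u hu => by
      simp only [Function.comp_apply, hfix1 u hu, hfix2 u hu],
    ψ2 ∘ ψ1, hψ2.comp hψ1, fun e he => ?_⟩
  have h1e : ψ1 e ∈ G.inducedEdges (U ∪ B) := hψ1.mapsTo he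
  rw [Function.comp_apply, hends2 _ h1e, hends1 _ he, Sym2.map_map]

theorem theta_case {ι : Type} (F : ι → Multigraph) {b c d : ℕ} (hb : 1 ≤ b)
    (hd : 2 * b * c + 2 * b + 1 ≤ d) {G : Multigraph} (hGconn : G.Connected)
    (hnoexc : ¬ HasExcessive F b c G) {u v : G.V} {S : Set G.V}
    (hθ : IsTheta d G u v) (hprot : IsProtrusion F G 2 S) (hu : u ∈ S) : False := by
  have h0 : (0:ℕ) ≤ 2 * b * c := Nat.zero_le _
  by_cases hv : v ∈ S
  · have hsub : G.parallelEdges u v ⊆ G.inducedEdges S := by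
      intro e he
      intro w hw
      rw [he, Sym2.mem_iff] at hw
      rcases hw with rfl | rfl
      · exact hu
      · exact hv
    have hle : d ≤ (G.inducedEdges S).ncard :=
      hθ.2.trans (Set.ncard_le_ncard hsub (Set.toFinite _))
    exact hnoexc (mk_excessive F b c hb hGconn ⟨u, hu⟩ hprot (by linarith))
  · have hsub : G.parallelEdges u v ⊆ G.edgeBoundary S := fun e he => ⟨u, v, he, hu, hv⟩
    have hle : d ≤ (G.edgeBoundary S).ncard :=
      hθ.2.trans (Set.ncard_le_ncard hsub (Set.toFinite _))
    have := hprot.1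
    linarith

theorem bouquet_attach_case {ι : Type} (F : ι → Multigraph) {b c d : ℕ} (hb : 1 ≤ b)
    (hd : 2 * b * c + 2 * b + 1 ≤ d) {G : Multigraph} (hGconn : G.Connected)
    (hnoexc : ¬ HasExcessive F b c G) {U : Set G.V} {𝒮₀ : Set (Set G.V)}
    (hB : IsBouquet F d G U 𝒮₀) {S : Set G.V} (hprot : IsProtrusion F G 2 S)
    {x : G.V} (hxU : x ∈ U) (hxS : x ∈ S) : False := by
  have h0 : (0:ℕ) ≤ 2 * b * c := Nat.zero_le _
  have hnb : ∀ T ∈ 𝒮₀, G.nbhd T = U := fun T hT => (hB.1.1 T hT).2.2.1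
  have hsel : ∀ T : ↥𝒮₀, ∃ e : G.E, ∃ y, y ∈ T.1 ∧ G.ends e = s(x, y) := by
    rintro ⟨T, hT⟩
    have : x ∈ G.nbhd T := (hnb T hT).symm ▸ hxU
    obtain ⟨_, e, y, hy, he⟩ := this
    exact ⟨e, y, hy, he⟩
  choose g y hy hg using hsel
  have hgmem : ∀ T : ↥𝒮₀, g T ∈ G.inducedEdges S ∪ G.edgeBoundary S := by
    intro T
    by_cases hyS : y T ∈ S
    · left
      intro w hw
      rw [hg T, Sym2.mem_iff] at hw
      rcases hw with rfl | rfl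
      · exact hxS
      · exact hyS
    · exact Or.inr ⟨x, y T, hg T, hxS, hyS⟩
  have hinj : Function.Injective
      (fun T : ↥𝒮₀ => (⟨g T, hgmem T⟩ : ↥(G.inducedEdges S ∪ G.edgeBoundary S))) := by
    intro T T' hTT
    simp only [Subtype.mk.injEq] at hTT
    have he : s(x, y T) = s(x, y T') := by rw [← hg T, ← hg T', hTT]
    rw [Sym2.eq_iff] at he
    have hyy : y T = y T' := by
      rcases he with ⟨_, h2⟩ | ⟨h1, h2⟩
      · exact h2
      · exfalso
        have hxT' : x ∈ G.nbhd T'.1 := (hnb T'.1 T'.2).symm ▸ hxU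
        exact hxT'.1 (h1 ▸ hy T')
    by_contra hne
    have hTne : T.1 ≠ T'.1 := fun h => hne (Subtype.ext h)
    have := hB.1.2.1 T.2 T'.2 hTne
    exact (this.ne_of_mem (hy T) (hyy ▸ hy T')) rfl
  have h1 := Nat.card_le_card_of_injective _ hinj
  rw [Nat.card_coe_set_eq, Nat.card_coe_set_eq] at h1
  have h2 : d ≤ (G.inducedEdges S ∪ G.edgeBoundary S).ncard := le_trans hB.2.1 h1
  have h3 := Set.ncard_union_le (G.inducedEdges S) (G.edgeBoundary S)
  have h4 := hprot.1
  exact hnoexc (mk_excessive F b c hb hGconn ⟨x, hxS⟩ hprot (by linarith))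
/-- in a connected graph with no excessive protrusions, bouquets
and thetas have pairwise disjoint edge sets, and attachments of bouquets and
thetas are disjoint from the elements of every bouquet. -/
theorem bouquets_thetas_disjoint {ι : Type} [Fintype ι] (F : ι → Multigraph)
    (hconn : ∀ i, (F i).Connected) (hedge : ∀ i, Nonempty (F i).E)
    (hps : ∃ i, (F i).Planar ∧ (F i).Subcubic)
    (aF : ℕ) (haF : ∀ G : Multigraph, FFree F G → tcw G ≤ aF) (cF : ℕ)
    (G : Multigraph) (hGconn : G.Connected)
    (hnoexc : ¬ HasExcessive F (4 * aF ^ 2 + 1) cF G) :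
    (∀ (U U' : Set G.V) (𝒮 𝒮' : Set (Set G.V)),
      IsBouquet F (dConst F (4 * aF ^ 2 + 1) cF) G U 𝒮 →
      IsBouquet F (dConst F (4 * aF ^ 2 + 1) cF) G U' 𝒮' → 𝒮 ≠ 𝒮' →
      Disjoint (G.bouquetEdges 𝒮) (G.bouquetEdges 𝒮')) ∧
    (∀ (U : Set G.V) (𝒮 : Set (Set G.V)) (u v : G.V),
      IsBouquet F (dConst F (4 * aF ^ 2 + 1) cF) G U 𝒮 →
      IsTheta (dConst F (4 * aF ^ 2 + 1) cF) G u v →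
      Disjoint (G.bouquetEdges 𝒮) (G.parallelEdges u v)) ∧
    (∀ u v u' v' : G.V,
      IsTheta (dConst F (4 * aF ^ 2 + 1) cF) G u v →
      IsTheta (dConst F (4 * aF ^ 2 + 1) cF) G u' v' →
      ({u, v} : Set G.V) ≠ {u', v'} →
      Disjoint (G.parallelEdges u v) (G.parallelEdges u' v')) ∧
    (∀ U : Set G.V,
      ((∃ 𝒮₀ : Set (Set G.V), IsBouquet F (dConst F (4 * aF ^ 2 + 1) cF) G U 𝒮₀) ∨
        (∃ u v : G.V, U = {u, v} ∧ IsTheta (dConst F (4 * aF ^ 2 + 1) cF) G u v)) →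
      ∀ (U' : Set G.V) (𝒮' : Set (Set G.V)),
        IsBouquet F (dConst F (4 * aF ^ 2 + 1) cF) G U' 𝒮' →
        ∀ S ∈ 𝒮', Disjoint U S) := by
  set b : ℕ := 4 * aF ^ 2 + 1 with hbdef
  set d : ℕ := dConst F b cF with hddef
  have hb : 1 ≤ b := Nat.le_add_left 1 _
  have hd : 2 * b * cF + 2 * b + 1 ≤ d := by
    rw [hddef, dConst]
    exact Nat.add_le_add_right (le_max_left _ _) 1
  -- theta symmetry helper
  have thsymm : ∀ {u v : G.V}, IsTheta d G u v → IsTheta d G v u := by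
    rintro u v ⟨h1, h2⟩
    exact ⟨h1.symm, by rwa [G.parallelEdges_comm v u]⟩
  -- Conclusion 4
  have c4 : ∀ U : Set G.V,
      ((∃ 𝒮₀ : Set (Set G.V), IsBouquet F d G U 𝒮₀) ∨
        (∃ u v : G.V, U = {u, v} ∧ IsTheta d G u v)) →
      ∀ (U' : Set G.V) (𝒮' : Set (Set G.V)), IsBouquet F d G U' 𝒮' →
        ∀ S ∈ 𝒮', Disjoint U S := by
    intro U hU U' 𝒮' hB' S hS
    rw [Set.disjoint_left]
    intro x hxU hxS
    have hprot : IsProtrusion F G 2 S := (hB'.1.1 S hS).2.1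
    rcases hU with ⟨𝒮₀, hB0⟩ | ⟨u, v, rfl, hθ⟩
    · exact bouquet_attach_case F hb hd hGconn hnoexc hB0 hprot hxU hxS
    · rcases hxU with rfl | rfl
      · exact theta_case F hb hd hGconn hnoexc hθ hprot hxS
      · exact theta_case F hb hd hGconn hnoexc (thsymm hθ) hprot hxS
  -- Conclusion 2
  have c2 : ∀ (U : Set G.V) (𝒮 : Set (Set G.V)) (u v : G.V),
      IsBouquet F d G U 𝒮 → IsTheta d G u v →
      Disjoint (G.bouquetEdges 𝒮) (G.parallelEdges u v) := by
    intro U 𝒮 u v hB hθ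
    rw [Set.disjoint_left]
    intro e he hpe
    obtain ⟨S, hS, w, hw, hwS⟩ := he
    have hprot : IsProtrusion F G 2 S := (hB.1.1 S hS).2.1
    rw [hpe, Sym2.mem_iff] at hw
    rcases hw with rfl | rfl
    · exact theta_case F hb hd hGconn hnoexc hθ hprot hwS
    · exact theta_case F hb hd hGconn hnoexc (thsymm hθ) hprot hwS
  -- Conclusion 3
  have c3 : ∀ u v u' v' : G.V, IsTheta d G u v → IsTheta d G u' v' →
      ({u, v} : Set G.V) ≠ {u', v'} →
      Disjoint (G.parallelEdges u v) (G.parallelEdges u' v') := by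
    intro u v u' v' _ _ hne
    rw [Set.disjoint_left]
    intro e he he'
    have h1 : G.ends e = s(u, v) := he
    have h2 : G.ends e = s(u', v') := he'
    rw [h1, Sym2.eq_iff] at h2
    rcases h2 with ⟨rfl, rfl⟩ | ⟨rfl, rfl⟩
    · exact hne rfl
    · exact hne (Set.pair_comm _ _)
  -- Conclusion 1
  refine ⟨?_, c2, c3, c4⟩
  intro U U' 𝒮 𝒮' hB hB' hne
  rw [Set.disjoint_left]
  intro e he he'
  obtain ⟨S, hS, a, ha, haS⟩ := he
  obtain ⟨S', hS', a', ha', haS'⟩ := he'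
  have key : ∀ T ∈ 𝒮, ∀ T' ∈ 𝒮', (T ∩ T').Nonempty → T = T' := by
    rintro T hT T' hT' ⟨z, hzT, hzT'⟩
    have hdisj1 : Disjoint U' T := c4 U' (Or.inl ⟨𝒮', hB'⟩) U 𝒮 hB T hT
    have hdisj2 : Disjoint U T' := c4 U (Or.inl ⟨𝒮, hB⟩) U' 𝒮' hB' T' hT'
    have hnbT' : G.nbhd T' = U' := (hB'.1.1 T' hT').2.2.1
    have hnbT : G.nbhd T = U := (hB.1.1 T hT).2.2.1
    apply Set.Subset.antisymm
    · intro w hw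
      obtain ⟨p, hp⟩ := (hB.1.1 T hT).2.2.2 z hzT w hw
      exact Multigraph.stay_in
        (fun q hq hqn => Set.disjoint_left.mp hdisj1 (hnbT' ▸ hqn) hq) p hp hzT'
    · intro w hw
      obtain ⟨p, hp⟩ := (hB'.1.1 T' hT').2.2.2 z hzT' w hw
      exact Multigraph.stay_in
        (fun q hq hqn => Set.disjoint_left.mp hdisj2 (hnbT ▸ hqn) hq) p hp hzT
  by_cases hinter : (S ∩ S').Nonempty
  · -- S = S', U = U', union is a bouquet family, contradict maximality
    have hSS' : S = S' := key S hS S' hS' hinter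
    subst hSS'
    have hU : G.nbhd S = U := (hB.1.1 S hS).2.2.1
    have hU' : G.nbhd S = U' := (hB'.1.1 S hS').2.2.1
    have hUU' : U' = U := hU' ▸ hU
    rw [hUU'] at hB'
    have hunion : IsBouquetFamily F G U (𝒮 ∪ 𝒮') := by
      refine ⟨?_, ?_, ?_⟩
      · rintro T (hT | hT)
        · exact hB.1.1 T hT
        · exact hB'.1.1 T hT
      · rintro T (hT | hT) T' (hT' | hT') hne'
        · exact hB.1.2.1 hT hT' hne'
        · rw [Set.disjoint_iff_inter_eq_empty, ← Set.not_nonempty_iff_eq_empty]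
          exact fun h => hne' (key T hT T' hT' h)
        · rw [Set.disjoint_iff_inter_eq_empty, ← Set.not_nonempty_iff_eq_empty]
          exact fun h => hne' ((key T' hT' T hT (Set.inter_comm T T' ▸ h)).symm)
        · exact hB'.1.2.1 hT hT' hne'
      · rintro T (hT | hT) T' (hT' | hT')
        · exact hB.1.2.2 T hT T' hT'
        · exact iso_trans (hB.1.2.2 T hT S hS) (hB'.1.2.2 S hS' T' hT')
        · exact iso_trans (hB'.1.2.2 T hT S hS') (hB.1.2.2 S hS T' hT')
        · exact hB'.1.2.2 T hT T' hT'
    have h1 : 𝒮 ∪ 𝒮' = 𝒮 := hB.2.2 _ Set.subset_union_left hunion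
    have h2 : 𝒮 ∪ 𝒮' = 𝒮' := hB'.2.2 _ Set.subset_union_right hunion
    exact hne (h1.symm.trans h2)
  · -- disjoint elements sharing the edge e
    have haS'n : a ∉ S' := fun h => hinter ⟨a, haS, h⟩
    have ha'Sn : a' ∉ S := fun h => hinter ⟨a', h, haS'⟩
    have hane : a ≠ a' := fun h => haS'n (h ▸ haS')
    -- ends e = s(a, a')
    have hea : G.ends e = s(a, a') := by
      obtain ⟨p, q, hends⟩ : ∃ p q, G.ends e = s(p, q) :=
        Sym2.ind (fun p q => ⟨p, q, rfl⟩) (G.ends e)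
      rw [hends, Sym2.mem_iff] at ha ha'
      rw [hends, Sym2.eq_iff]
      rcases ha with rfl | rfl <;> rcases ha' with rfl | rfl
      · exact absurd rfl hane
      · exact Or.inl ⟨rfl, rfl⟩
      · exact Or.inr ⟨rfl, rfl⟩
      · exact absurd rfl hane
    have hnbS : G.nbhd S = U := (hB.1.1 S hS).2.2.1
    have ha'U : a' ∈ U := by
      rw [← hnbS]
      exact ⟨ha'Sn, e, a, haS, hea.trans (Sym2.eq_swap)⟩
    exact Set.disjoint_left.mp (c4 U (Or.inl ⟨𝒮, hB⟩) U' 𝒮' hB' S' hS') ha'U haS'
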